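/- arXiv:2102.08042 — 2 statements merged into one kernel-verified Lean document; each statement's English description precedes it below -/
import Mathlib

section
/- Let $T \in (0, \infty]$, $\tau \in (0, T)$, $a > 0$ and $b > 0$. Suppose $y \colon [0, T) \to [0, \infty)$ is continuous on $[0,T)$, differentiable on $(0, T)$, and satisfies $y'(t) + a\,y(t) \le h(t)$ for all $t \in (0, T)$, where $h \colon [0,T) \to [0,\infty)$ is locally integrable and satisfies $\int_t^{t+\tau} h(s)\,ds \le b$ for all $t \in [0, T - \tau)$. Then $y(t) \le \max\{\, y(0) + b,\; b/(a\tau) + 2b \,\}$ for all $t \in [0, T)$. -/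
/-!
Let `c = M - b`, where `M` is the claimed bound. If `y` exceeded `M` at some time `t`, take
the last time `s < t` with `y s ≤ c`. On `(s, t]` we have `y > c`, so `y' ≤ h - a c` there,
and `y` can rise by at most `∫ h` minus `a c` times the elapsed time. If `t - s ≤ τ`, this rise
is at most `b`, so `y t ≤ c + b = M`. Otherwise, over `[s, s + τ]` it is at most
`b - a τ c < 0`, because `c ≥ b / (a τ) + b`; then `y (s + τ) < c`, contradicting the choice
of `s`.
-/

open MeasureTheory Set ENNReal

theorem ContinuousOn.exists_last_le {f : ℝ → ℝ} {a b c : ℝ} (hf : ContinuousOn f (Icc a b))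
    (hab : a ≤ b) (ha : f a ≤ c) (hb : c < f b) :
    ∃ s ∈ Ico a b, f s ≤ c ∧ ∀ r ∈ Ioc s b, c < f r := by
  set A := Icc a b ∩ f ⁻¹' Iic c
  have hA_bdd : BddAbove A := ⟨b, fun r hr => hr.1.2⟩
  have hs : sSup A ∈ A :=
    (hf.preimage_isClosed_of_isClosed isClosed_Icc isClosed_Iic).csSup_mem
      ⟨a, ⟨le_rfl, hab⟩, ha⟩ hA_bdd
  refine ⟨sSup A, ⟨hs.1.1, lt_of_le_of_ne hs.1.2 ?_⟩, hs.2, fun r hr => ?_⟩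
  · rintro hsb
    exact (hsb ▸ hs.2 : f b ≤ c).not_gt hb
  · by_contra! hr_le
    exact hr.1.not_ge (le_csSup hA_bdd ⟨⟨hs.1.1.trans hr.1.le, hr.2⟩, hr_le⟩)

theorem integral_le_of_forall_window_integral_le {h : ℝ → ℝ} {L τ b s t : ℝ}
    (hτL : τ ≤ L) (h_nonneg : ∀ x ∈ Icc 0 L, 0 ≤ h x)
    (h_int : IntervalIntegrable h volume 0 L)
    (h_window : ∀ c, 0 ≤ c → c + τ ≤ L → ∫ x in c..c + τ, h x ≤ b)
    (hs : 0 ≤ s) (hst : s ≤ t) (htL : t ≤ L) (hts : t ≤ s + τ) :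
    ∫ x in s..t, h x ≤ b := by
  -- `[s, t]` lies in the admissible window starting at `min s (L - τ)`.
  set c := min s (L - τ)
  have hc : 0 ≤ c := le_min hs (sub_nonneg.2 hτL)
  have hcL : c + τ ≤ L := by simp only [c]; linarith [min_le_right s (L - τ)]
  calc ∫ x in s..t, h x ≤ ∫ x in c..c + τ, h x := by
        refine intervalIntegral.integral_mono_interval (min_le_left _ _) hst ?_ ?_ ?_
        · show t ≤ min s (L - τ) + τ
          rw [← min_add_add_right, sub_add_cancel]; exact le_min hts htL
        · exact (ae_restrict_iff' measurableSet_Ioc).2 (ae_of_all _ fun x hx =>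
            h_nonneg x ⟨hc.trans hx.1.le, hx.2.trans hcL⟩)
        · exact h_int.mono_set (by
            rw [uIcc_of_le (by linarith), uIcc_of_le (by linarith)]
            exact Icc_subset_Icc hc hcL)
    _ ≤ b := h_window c hc hcL

theorem sub_le_integral_sub_mul_of_deriv_add_mul_le {y y' h : ℝ → ℝ} {a c s r : ℝ}
    (hsr : s ≤ r) (ha : 0 ≤ a) (hy_cont : ContinuousOn y (Icc s r))
    (hy_deriv : ∀ x ∈ Ioo s r, HasDerivAt y (y' x) x)
    (hineq : ∀ x ∈ Ioo s r, y' x + a * y x ≤ h x) (hy_ge : ∀ x ∈ Ioo s r, c ≤ y x)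
    (h_int : IntervalIntegrable h volume s r) :
    y r - y s ≤ (∫ x in s..r, h x) - a * c * (r - s) := by
  have hy'_le : ∀ x ∈ Ioo s r, y' x ≤ h x - a * c := fun x hx => by
    nlinarith [hineq x hx, hy_ge x hx]
  have := intervalIntegral.sub_le_integral_of_hasDeriv_right_of_le hsr hy_cont
    (fun x hx => (hy_deriv x hx).hasDerivWithinAt)
    ((integrableOn_Icc_iff_integrableOn_Ioc (by simp)).2 (h_int.sub intervalIntegrable_const).1)
    hy'_le
  rwa [intervalIntegral.integral_sub h_int intervalIntegrable_const,
    intervalIntegral.integral_const, smul_eq_mul, mul_comm] at this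

theorem le_max_of_deriv_add_mul_le_of_window_integral_le {L τ a b : ℝ}
    (hτ : 0 < τ) (hτL : τ ≤ L) (ha : 0 < a) (hb : 0 < b) {y y' h : ℝ → ℝ}
    (hy_cont : ContinuousOn y (Icc 0 L))
    (hy_deriv : ∀ t ∈ Ioo 0 L, HasDerivAt y (y' t) t)
    (hineq : ∀ t ∈ Ioo 0 L, y' t + a * y t ≤ h t)
    (h_nonneg : ∀ t ∈ Icc 0 L, 0 ≤ h t) (h_int : IntervalIntegrable h volume 0 L)
    (h_window : ∀ c, 0 ≤ c → c + τ ≤ L → ∫ x in c..c + τ, h x ≤ b) :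
    ∀ t ∈ Icc 0 L, y t ≤ max (y 0 + b) (b / (a * τ) + 2 * b) := by
  rintro t ⟨ht0, htL⟩
  by_contra! hyt
  set c := max (y 0 + b) (b / (a * τ) + 2 * b) - b
  have hy0c : y 0 ≤ c := by have := le_max_left (y 0 + b) (b / (a * τ) + 2 * b); linarith
  have haτb : 0 < a * τ * b := by positivity
  have hc : b + a * τ * b ≤ a * τ * c := by
    have := le_max_right (y 0 + b) (b / (a * τ) + 2 * b)
    have hdiv : a * τ * (b / (a * τ)) = b := mul_div_cancel₀ b (by positivity)
    nlinarith [mul_pos ha hτ]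
  obtain ⟨s, ⟨hs0, hst⟩, hysc, hy_gt⟩ :=
    (hy_cont.mono (Icc_subset_Icc_right htL)).exists_last_le ht0 hy0c (by linarith)
  have hdrop : ∀ r ∈ Ioc s t, y r - y s ≤ (∫ x in s..r, h x) - a * c * (r - s) := by
    rintro r ⟨hsr, hrt⟩
    have hrL := hrt.trans htL
    refine sub_le_integral_sub_mul_of_deriv_add_mul_le hsr.le ha.le
      (hy_cont.mono (Icc_subset_Icc hs0 hrL))
      (fun x hx => hy_deriv x (Ioo_subset_Ioo hs0 hrL hx))
      (fun x hx => hineq x (Ioo_subset_Ioo hs0 hrL hx))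
      (fun x hx => (hy_gt x ⟨hx.1, hx.2.le.trans hrt⟩).le) (h_int.mono_set ?_)
    rw [uIcc_of_le hsr.le, uIcc_of_le (hs0.trans (hsr.le.trans hrL))]
    exact Icc_subset_Icc hs0 hrL
  have hc_pos : 0 < c := pos_of_mul_pos_right (by linarith) (by positivity : 0 ≤ a * τ)
  rcases le_or_gt t (s + τ) with hts | hts
  · have hdrop_t := hdrop t ⟨hst, le_rfl⟩
    have hwin := integral_le_of_forall_window_integral_le hτL h_nonneg h_int h_window hs0
      hst.le htL hts
    have hc_nonneg : 0 ≤ a * c * (t - s) := mul_nonneg (by positivity) (sub_nonneg.2 hst.le)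
    linarith
  · have hdrop_τ := hdrop (s + τ) ⟨by linarith, hts.le⟩
    have hwin := h_window s hs0 (by linarith)
    have := hy_gt (s + τ) ⟨by linarith, hts.le⟩
    rw [add_sub_cancel_left] at hdrop_τ
    linarith

/-- `T ∈ (0,∞]` is modeled as `T : ℝ≥0∞`; a real time `t ≥ 0` lies in `[0,T)` iff
`ENNReal.ofReal t < T`. -/
theorem ode_uniform_bound_general
    (T : ℝ≥0∞)
    (τ a b : ℝ) (hτ : 0 < τ) (hτT : ENNReal.ofReal τ < T)
    (ha : 0 < a) (hb : 0 < b)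
    (y y' h : ℝ → ℝ)
    -- y is continuous on [0,T)
    (hy_cont : ContinuousOn y {t : ℝ | 0 ≤ t ∧ ENNReal.ofReal t < T})
    -- y is differentiable on (0,T) with derivative y'
    (hy_deriv : ∀ t : ℝ, 0 < t → ENNReal.ofReal t < T → HasDerivAt y (y' t) t)
    -- the differential inequality y'(t) + a y(t) ≤ h(t) on (0,T)
    (hineq : ∀ t : ℝ, 0 < t → ENNReal.ofReal t < T → y' t + a * y t ≤ h t)
    -- h is nonnegative on [0,T)
    (hh_nonneg : ∀ t : ℝ, 0 ≤ t → ENNReal.ofReal t < T → 0 ≤ h t)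
    -- h is locally integrable on [0,T): integrable on every compact subinterval
    (hh_loc : ∀ s t : ℝ, 0 ≤ s → s ≤ t → ENNReal.ofReal t < T →
      IntervalIntegrable h volume s t)
    -- ∫_t^{t+τ} h ≤ b for all t ∈ [0, T-τ)
    (hh_int : ∀ t : ℝ, 0 ≤ t → ENNReal.ofReal (t + τ) < T →
      (∫ s in t..(t + τ), h s) ≤ b) :
    ∀ t : ℝ, 0 ≤ t → ENNReal.ofReal t < T →
      y t ≤ max (y 0 + b) (b / (a * τ) + 2 * b) := by
  intro t ht0 htT
  -- Everything happens inside the compact horizon `[0, L] ⊆ [0, T)`.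
  set L := max t τ
  have hL : ∀ r ≤ L, ENNReal.ofReal r < T := fun r hr =>
    (ENNReal.ofReal_le_ofReal hr).trans_lt (by rw [ENNReal.ofReal_max]; exact max_lt htT hτT)
  refine le_max_of_deriv_add_mul_le_of_window_integral_le hτ (le_max_right t τ) ha hb
    (hy_cont.mono fun r hr => ⟨hr.1, hL r hr.2⟩)
    (fun r hr => hy_deriv r hr.1 (hL r hr.2.le))
    (fun r hr => hineq r hr.1 (hL r hr.2.le))
    (fun r hr => hh_nonneg r hr.1 (hL r hr.2))
    (hh_loc 0 L le_rfl (hτ.le.trans (le_max_right t τ)) (hL L le_rfl))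
    (fun c hc hcL => hh_int c hc (hL _ hcL)) t ⟨ht0, le_max_left t τ⟩

/-- Uniform-in-time ODE comparison lemma (Lemma 2.2 of the paper).
`T ∈ (0,∞]` is modeled as `T : ℝ≥0∞` with `0 < T`; a real time `t ≥ 0` belongs to
`[0,T)` iff `ENNReal.ofReal t < T` (which also covers the case `T = ∞`). -/
theorem ode_uniform_bound
    (T : ℝ≥0∞) (hT : 0 < T)
    (τ a b : ℝ) (hτ : 0 < τ) (hτT : ENNReal.ofReal τ < T)
    (ha : 0 < a) (hb : 0 < b)
    (y y' h : ℝ → ℝ)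
    -- y maps [0,T) into [0,∞)
    (hy_nonneg : ∀ t : ℝ, 0 ≤ t → ENNReal.ofReal t < T → 0 ≤ y t)
    -- y is continuous on [0,T)
    (hy_cont : ContinuousOn y {t : ℝ | 0 ≤ t ∧ ENNReal.ofReal t < T})
    -- y is differentiable on (0,T) with derivative y'
    (hy_deriv : ∀ t : ℝ, 0 < t → ENNReal.ofReal t < T → HasDerivAt y (y' t) t)
    -- the differential inequality y'(t) + a y(t) ≤ h(t) on (0,T)
    (hineq : ∀ t : ℝ, 0 < t → ENNReal.ofReal t < T → y' t + a * y t ≤ h t)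
    -- h is nonnegative on [0,T)
    (hh_nonneg : ∀ t : ℝ, 0 ≤ t → ENNReal.ofReal t < T → 0 ≤ h t)
    -- h is locally integrable on [0,T): integrable on every compact subinterval
    (hh_loc : ∀ s t : ℝ, 0 ≤ s → s ≤ t → ENNReal.ofReal t < T →
      IntervalIntegrable h volume s t)
    -- ∫_t^{t+τ} h ≤ b for all t ∈ [0, T-τ)
    (hh_int : ∀ t : ℝ, 0 ≤ t → ENNReal.ofReal (t + τ) < T →
      (∫ s in t..(t + τ), h s) ≤ b) :
    ∀ t : ℝ, 0 ≤ t → ENNReal.ofReal t < T →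
      y t ≤ max (y 0 + b) (b / (a * τ) + 2 * b) :=
  ode_uniform_bound_general T τ a b hτ hτT ha hb y y' h hy_cont hy_deriv hineq hh_nonneg hh_loc
    hh_int
end

section
/- Let $K \ge 1$ and $C \ge 1$ be real constants, and let $a \colon \mathbb{N} \to [0, \infty)$ be a sequence satisfying, for every $j \ge 1$, $a_j \le K^{2^j} + C\,(1 + 2^j)^{6}\,(a_{j-1})^{2}$. Then the sequence $\big( (a_j)^{2^{-j}} \big)_{j \ge 0}$ is bounded above; that is, there exists $M > 0$ such that $a_j \le M^{2^j}$ for all $j \ge 0$. -/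
/-!
Replacing `a j` by `b j = max (a j) (K ^ 2 ^ j)` absorbs the inhomogeneous term, giving
`b (j + 1) ≤ D ^ (j + 2) * (b j) ^ 2` with `D = 128 C`. For such a recursion the quantity
`D ^ (j + 3) * b j` at most squares from one step to the next, so it is bounded by
`(D ^ 3 * b 0) ^ 2 ^ j`.
-/

section QuadraticRecursion

variable {D : ℝ} {b : ℕ → ℝ} {k : ℕ}

theorem pow_mul_le_pow_two_pow_of_le_pow_mul_sq (hD : 0 ≤ D) (hb : ∀ j, 0 ≤ b j)
    (h : ∀ j, b (j + 1) ≤ D ^ (j + k) * b j ^ 2) (j : ℕ) :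
    D ^ (j + k + 1) * b j ≤ (D ^ (k + 1) * b 0) ^ 2 ^ j := by
  induction j with
  | zero => simp
  | succ j ih =>
    calc D ^ (j + 1 + k + 1) * b (j + 1)
        ≤ D ^ (j + 1 + k + 1) * (D ^ (j + k) * b j ^ 2) := by gcongr; exact h j
      _ = (D ^ (j + k + 1) * b j) ^ 2 := by ring
      _ ≤ ((D ^ (k + 1) * b 0) ^ 2 ^ j) ^ 2 := by gcongr; exact mul_nonneg (by positivity) (hb j)
      _ = (D ^ (k + 1) * b 0) ^ 2 ^ (j + 1) := by rw [← pow_mul, ← pow_succ]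

theorem le_pow_two_pow_of_le_pow_mul_sq (hD : 1 ≤ D) (hb : ∀ j, 0 ≤ b j)
    (h : ∀ j, b (j + 1) ≤ D ^ (j + k) * b j ^ 2) (j : ℕ) :
    b j ≤ (D ^ (k + 1) * b 0) ^ 2 ^ j :=
  calc b j ≤ D ^ (j + k + 1) * b j := le_mul_of_one_le_left (hb j) (one_le_pow₀ hD)
    _ ≤ _ := pow_mul_le_pow_two_pow_of_le_pow_mul_sq (zero_le_one.trans hD) hb h j

end QuadraticRecursion

theorem one_add_mul_one_add_two_pow_pow_six_le {C : ℝ} (hC : 1 ≤ C) (n : ℕ) :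
    1 + C * (1 + 2 ^ n) ^ 6 ≤ (128 * C) ^ (n + 1) := by
  have h2 : (1 : ℝ) ≤ 2 ^ n := one_le_pow₀ one_le_two
  have h64 : (1 : ℝ) ≤ 64 ^ (n + 1) := one_le_pow₀ (by norm_num)
  calc 1 + C * (1 + 2 ^ n) ^ 6 ≤ C * 64 ^ (n + 1) + C * 64 ^ (n + 1) := by
        gcongr
        · nlinarith
        · calc (1 + (2 : ℝ) ^ n) ^ 6 ≤ (2 ^ (n + 1)) ^ 6 := by gcongr; rw [pow_succ]; linarith
            _ = 64 ^ (n + 1) := by rw [← pow_mul, mul_comm, pow_mul]; norm_num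
    _ = 2 * C * 64 ^ (n + 1) := by ring
    _ ≤ 2 ^ (n + 1) * C ^ (n + 1) * 64 ^ (n + 1) := by
        gcongr
        · exact le_self_pow₀ one_le_two (Nat.succ_ne_zero n)
        · exact le_self_pow₀ hC (Nat.succ_ne_zero n)
    _ = (128 * C) ^ (n + 1) := by
        rw [mul_pow, show (128 : ℝ) = 2 * 64 by norm_num, mul_pow]; ring

/-- Recursive (dyadic) form of the Moser iteration argument used in the proof of
Lemma 3.14: if `a_j ≤ K^(2^j) + C (1 + 2^j)^6 (a_{j-1})^2` for all `j ≥ 1`,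
then `(a_j)^(2⁻ʲ)` is bounded, i.e. `a_j ≤ M^(2^j)` for some `M > 0`. -/
theorem moser_iteration_bound
    (K C : ℝ) (hK : 1 ≤ K) (hC : 1 ≤ C)
    (a : ℕ → ℝ)
    (ha_nonneg : ∀ j : ℕ, 0 ≤ a j)
    (hrec : ∀ j : ℕ, 1 ≤ j →
      a j ≤ K ^ (2 ^ j) + C * (1 + (2 : ℝ) ^ j) ^ 6 * (a (j - 1)) ^ 2) :
    ∃ M : ℝ, 0 < M ∧ ∀ j : ℕ, a j ≤ M ^ (2 ^ j) := by
  set b : ℕ → ℝ := fun j => max (a j) (K ^ 2 ^ j)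
  have hb : ∀ j, 0 ≤ b j := fun j => (ha_nonneg j).trans (le_max_left _ _)
  have step : ∀ j, b (j + 1) ≤ (128 * C) ^ (j + 2) * b j ^ 2 := by
    intro j
    have hKb : K ^ 2 ^ (j + 1) ≤ b j ^ 2 := by
      rw [pow_succ, pow_mul]; gcongr; exact le_max_right _ _
    have hD : (1 : ℝ) ≤ (128 * C) ^ (j + 2) := one_le_pow₀ (by linarith)
    refine max_le ?_ (hKb.trans (le_mul_of_one_le_left (sq_nonneg _) hD))
    calc a (j + 1) ≤ K ^ 2 ^ (j + 1) + C * (1 + 2 ^ (j + 1)) ^ 6 * a j ^ 2 := by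
          simpa using hrec (j + 1) (Nat.le_add_left 1 j)
      _ ≤ b j ^ 2 + C * (1 + 2 ^ (j + 1)) ^ 6 * b j ^ 2 := by
          gcongr
          exacts [ha_nonneg j, le_max_left _ _]
      _ = (1 + C * (1 + 2 ^ (j + 1)) ^ 6) * b j ^ 2 := by ring
      _ ≤ (128 * C) ^ (j + 2) * b j ^ 2 := by
          gcongr; exact one_add_mul_one_add_two_pow_pow_six_le hC (j + 1)
  refine ⟨(128 * C) ^ 3 * b 0, by positivity, fun j => ?_⟩
  exact (le_max_left _ _).trans
    (le_pow_two_pow_of_le_pow_mul_sq (k := 2) (by linarith) hb step j)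
end
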